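/- Let a1, a2, a3 ∈ SU(2) satisfy a1·a2·a3 = I, with eigenvalues of a_j equal to -e^{±iC_j}. Then equality cos²C₁ + cos²C₂ + cos²C₃ + 2·cosC₁·cosC₂·cosC₃ = 1 holds if and only if a1, a2, a3 are simultaneously diagonalizable (equivalently, pairwise commute). -/

import Mathlib

/-!
Write `x, y, z` for the traces of `a₁`, `a₂` and `a₁ a₂ = a₃⁻¹`; in `SL₂` an element and its
inverse have the same trace, so `x = -2 cos C₁`, `y = -2 cos C₂`, `z = -2 cos C₃`. The Fricke
identity `tr ⁅a₁, a₂⁆ = x² + y² + z² - xyz - 2` turns the trace equality into `tr ⁅a₁, a₂⁆ = 2`,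
and a unitary `2 × 2` matrix of trace `2` is the identity, so the equality says that `a₁` and `a₂`
commute. Every element of `SU(2)` is a scalar plus a multiple of a Hermitian matrix, hence
diagonalizable, and commuting diagonalizable `2 × 2` matrices are simultaneously diagonalizable:
a non-scalar one has a diagonal form with distinct entries, which forces everything commuting
with it to be diagonal in the same basis.
-/

open Complex Matrix
open scoped commutatorElement

namespace Matrix

variable {n R : Type*} [Fintype n] [DecidableEq n] [CommRing R]

lemma conj_mul_conj (P : GL n R) (A B : Matrix n n R) :
    (P⁻¹ * A * P) * (P⁻¹ * B * P) = (P⁻¹ * (A * B) * P : Matrix n n R) := by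
  simp only [mul_assoc, Units.mul_inv_cancel_left]

lemma conj_injective (P : GL n R) :
    Function.Injective (fun A : Matrix n n R => (P⁻¹ * A * P : Matrix n n R)) := by
  intro A B h
  simpa [mul_assoc] using congr((P : Matrix n n R) * $h * (P⁻¹ : GL n R))

lemma commute_conj_iff (P : GL n R) {A B : Matrix n n R} :
    Commute (P⁻¹ * A * P : Matrix n n R) (P⁻¹ * B * P) ↔ Commute A B := by
  simp only [Commute, SemiconjBy, conj_mul_conj]
  exact (conj_injective P).eq_iff

lemma conj_smul_one (P : GL n R) (c : R) : (P⁻¹ * (c • 1) * P : Matrix n n R) = c • 1 := by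
  simp

lemma isDiag_conj_smul_one_add_smul (P : GL n R) {H : Matrix n n R}
    (hH : (P⁻¹ * H * P : Matrix n n R).IsDiag) (c z : R) :
    (P⁻¹ * (c • 1 + z • H) * P : Matrix n n R).IsDiag := by
  simp only [mul_add, add_mul, Matrix.mul_smul, Matrix.smul_mul, mul_one, Units.inv_mul]
  exact (isDiag_smul_one n c).add (hH.smul z)

lemma IsDiag.commute {A B : Matrix n n R} (hA : A.IsDiag) (hB : B.IsDiag) : Commute A B := by
  rw [← hA.diagonal_diag, ← hB.diagonal_diag]
  exact commute_diagonal _ _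

lemma isDiag_of_commute_diagonal [NoZeroDivisors R] {d : n → R} (hd : Function.Injective d)
    {M : Matrix n n R} (h : Commute (diagonal d) M) : M.IsDiag := by
  intro i j hij
  have hM : (d i - d j) * M i j = 0 := by
    have := congr_fun₂ h.eq i j
    simp only [diagonal_mul, mul_diagonal] at this
    linear_combination this
  exact (mul_eq_zero.mp hM).resolve_left (sub_ne_zero.mpr (hd.ne hij))

lemma IsDiag.eq_smul_one_of_fin_two {D : Matrix (Fin 2) (Fin 2) R} (hD : D.IsDiag)
    (h : D 0 0 = D 1 1) : D = D 0 0 • 1 := by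
  ext i j
  fin_cases i <;> fin_cases j <;>
    simp [h, hD (show (0 : Fin 2) ≠ 1 by decide), hD (show (1 : Fin 2) ≠ 0 by decide)]

lemma exists_isDiag_conj_of_commute_fin_two [NoZeroDivisors R] {ι : Type*}
    (A : ι → Matrix (Fin 2) (Fin 2) R)
    (hdiag : ∀ i, ∃ P : GL (Fin 2) R, (P⁻¹ * A i * P : Matrix (Fin 2) (Fin 2) R).IsDiag)
    (hcomm : ∀ i j, Commute (A i) (A j)) :
    ∃ P : GL (Fin 2) R, ∀ i, (P⁻¹ * A i * P : Matrix (Fin 2) (Fin 2) R).IsDiag := by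
  by_cases hscalar : ∀ i, ∃ c : R, A i = c • 1
  · refine ⟨1, fun i => ?_⟩
    obtain ⟨c, hc⟩ := hscalar i
    rw [hc, conj_smul_one]
    exact isDiag_smul_one _ c
  push Not at hscalar
  obtain ⟨i₀, hi₀⟩ := hscalar
  obtain ⟨P, hP⟩ := hdiag i₀
  set D : Matrix (Fin 2) (Fin 2) R := P⁻¹ * A i₀ * P with hD
  have hne : D 0 0 ≠ D 1 1 := fun h =>
    hi₀ (D 0 0) (conj_injective P (by simpa only [conj_smul_one] using hP.eq_smul_one_of_fin_two h))
  have hinj : Function.Injective D.diag := by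
    intro i j hij
    fin_cases i <;> fin_cases j
    all_goals first | rfl | exact absurd hij hne | exact absurd hij.symm hne
  refine ⟨P, fun i => isDiag_of_commute_diagonal hinj ?_⟩
  rw [hP.diagonal_diag, hD, commute_conj_iff]
  exact hcomm i₀ i

lemma IsHermitian.exists_isDiag_conj {𝕜 : Type*} [RCLike 𝕜] {H : Matrix n n 𝕜}
    (hH : H.IsHermitian) : ∃ P : GL n 𝕜, (P⁻¹ * H * P : Matrix n n 𝕜).IsDiag := by
  refine ⟨Unitary.toUnits hH.eigenvectorUnitary, ?_⟩
  have hdiag := hH.conjStarAlgAut_star_eigenvectorUnitary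
  rw [Unitary.conjStarAlgAut_star_apply] at hdiag
  simp [hdiag]

open scoped ComplexOrder in
lemma trace_eq_card_iff_eq_one {𝕜 : Type*} [RCLike 𝕜] {U : Matrix n n 𝕜}
    (hU : U ∈ unitaryGroup n 𝕜) : U.trace = Fintype.card n ↔ U = 1 := by
  refine ⟨fun h => ?_, fun h => by simp [h]⟩
  have hUU : star U * U = 1 := hU.1
  rw [← sub_eq_zero, ← trace_conjTranspose_mul_self_eq_zero_iff]
  have hsq : (U - 1)ᴴ * (U - 1) = 1 + 1 - Uᴴ - U := by
    rw [conjTranspose_sub, conjTranspose_one, sub_mul, mul_sub, mul_sub, ← star_eq_conjTranspose,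
      hUU, mul_one, one_mul, one_mul]
    abel
  rw [hsq, trace_sub, trace_sub, trace_add, trace_conjTranspose, h, trace_one]
  simp

lemma adjugate_fin_two_eq_trace_smul_one_sub (A : Matrix (Fin 2) (Fin 2) R) :
    adjugate A = A.trace • 1 - A := by
  ext i j
  fin_cases i <;> fin_cases j <;> simp [adjugate_fin_two, trace_fin_two]

lemma trace_adjugate_fin_two (A : Matrix (Fin 2) (Fin 2) R) : (adjugate A).trace = A.trace := by
  rw [adjugate_fin_two_eq_trace_smul_one_sub, trace_sub, trace_smul, trace_one]
  simp only [Fintype.card_fin, smul_eq_mul]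
  ring

lemma trace_mul_mul_adjugate_mul_adjugate_fin_two (A B : Matrix (Fin 2) (Fin 2) R) :
    (A * B * adjugate A * adjugate B).trace =
      B.det * A.trace ^ 2 + A.det * B.trace ^ 2 + (A * B).trace ^ 2
        - A.trace * B.trace * (A * B).trace - 2 * A.det * B.det := by
  simp only [trace_fin_two, adjugate_fin_two, det_fin_two, mul_apply, Fin.sum_univ_two, of_apply,
    cons_val', cons_val_zero, cons_val_one, empty_val', cons_val_fin_one]
  ring

lemma trace_fin_two_eq_add_inv_of_mem_spectrum {K : Type*} [Field K]
    {A : Matrix (Fin 2) (Fin 2) K} (hA : A.det = 1) {μ : K} (hμ : μ ∈ spectrum K A) :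
    A.trace = μ + μ⁻¹ := by
  rw [mem_spectrum_iff_isRoot_charpoly, charpoly_fin_two, Polynomial.IsRoot.def] at hμ
  simp only [Polynomial.eval_add, Polynomial.eval_sub, Polynomial.eval_pow, Polynomial.eval_X,
    Polynomial.eval_mul, Polynomial.eval_C, hA] at hμ
  have hμ0 : μ ≠ 0 := by rintro rfl; simp at hμ
  field_simp
  linear_combination -hμ

lemma trace_eq_neg_two_mul_cos {A : Matrix (Fin 2) (Fin 2) ℂ} (hA : A.det = 1) {C : ℝ}
    (hC : -exp (I * C) ∈ spectrum ℂ A) : A.trace = -2 * Real.cos C := by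
  rw [trace_fin_two_eq_add_inv_of_mem_spectrum hA hC, ← neg_inv, ← Complex.exp_neg, ofReal_cos, neg_mul,
    two_cos, neg_mul, mul_comm _ I]
  ring

namespace specialUnitaryGroup

variable {α : Type*} [CommRing α] [StarRing α]

lemma coe_inv_eq_adjugate (a : specialUnitaryGroup n α) :
    ((a⁻¹ : specialUnitaryGroup n α) : Matrix n n α) = adjugate a := by
  obtain ⟨ha, hdet⟩ := mem_specialUnitaryGroup_iff.mp a.2
  rw [← one_smul α (adjugate (a : Matrix n n α)), ← Ring.inverse_one, ← hdet, ← Matrix.inv_def]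
  exact (inv_eq_left_inv ha.1).symm

lemma trace_coe_inv (a : specialUnitaryGroup (Fin 2) α) : trace a⁻¹.1 = trace a.1 := by
  rw [coe_inv_eq_adjugate, trace_adjugate_fin_two]

lemma trace_commutatorElement (a b : specialUnitaryGroup (Fin 2) α) :
    trace (⁅a, b⁆ : specialUnitaryGroup (Fin 2) α).1 =
      trace a.1 ^ 2 + trace b.1 ^ 2 + trace (a * b).1 ^ 2
        - trace a.1 * trace b.1 * trace (a * b).1 - 2 := by
  rw [commutatorElement_def, Submonoid.coe_mul, Submonoid.coe_mul, Submonoid.coe_mul,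
    coe_inv_eq_adjugate, coe_inv_eq_adjugate, trace_mul_mul_adjugate_mul_adjugate_fin_two,
    (mem_specialUnitaryGroup_iff.mp a.2).2, (mem_specialUnitaryGroup_iff.mp b.2).2]
  ring

lemma trace_commutatorElement_eq_two_iff {𝕜 : Type*} [RCLike 𝕜]
    (a b : specialUnitaryGroup (Fin 2) 𝕜) :
    trace (⁅a, b⁆ : specialUnitaryGroup (Fin 2) 𝕜).1 = 2 ↔ Commute a b := by
  rw [← commutatorElement_eq_one_iff_commute, Subtype.ext_iff, OneMemClass.coe_one,
    ← trace_eq_card_iff_eq_one (specialUnitaryGroup_le_unitaryGroup ⁅a, b⁆.2)]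
  norm_num

lemma exists_isDiag_conj (a : specialUnitaryGroup (Fin 2) ℂ) :
    ∃ P : GL (Fin 2) ℂ, (P⁻¹ * a.1 * P : Matrix (Fin 2) (Fin 2) ℂ).IsDiag := by
  have hstar : star a.1 = a.1.trace • 1 - a.1 := by
    rw [← coe_star, star_eq_inv, coe_inv_eq_adjugate, adjugate_fin_two_eq_trace_smul_one_sub]
  have hH : (I • (a.1 - star a.1)).IsHermitian := by
    rw [IsHermitian, conjTranspose_smul, conjTranspose_sub, star_eq_conjTranspose,
      conjTranspose_conjTranspose, star_def, conj_I, neg_smul, ← smul_neg, neg_sub]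
  obtain ⟨P, hP⟩ := hH.exists_isDiag_conj
  have hdecomp : a.1 = (a.1.trace / 2) • 1 + (-I / 2) • I • (a.1 - star a.1) := by
    have hI : -I / 2 * I = 1 / 2 := by rw [div_mul_eq_mul_div, neg_mul, I_mul_I]; norm_num
    rw [hstar, smul_smul, hI]
    module
  exact ⟨P, hdecomp ▸ isDiag_conj_smul_one_add_smul P hP _ _⟩

lemma commute_iff_exists_isDiag_conj {a b c : specialUnitaryGroup (Fin 2) ℂ} (h : a * b * c = 1) :
    Commute a b ↔ ∃ P : GL (Fin 2) ℂ, (P⁻¹ * a.1 * P : Matrix (Fin 2) (Fin 2) ℂ).IsDiag ∧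
      (P⁻¹ * b.1 * P : Matrix (Fin 2) (Fin 2) ℂ).IsDiag ∧
      (P⁻¹ * c.1 * P : Matrix (Fin 2) (Fin 2) ℂ).IsDiag := by
  refine ⟨fun hab => ?_, fun ⟨P, ha, hb, _⟩ =>
    Subtype.ext ((commute_conj_iff P).1 (ha.commute hb)).eq⟩
  have hc : c = (a * b)⁻¹ := eq_inv_of_mul_eq_one_right h
  have hac : Commute a c := hc ▸ ((Commute.refl a).mul_right hab).inv_right
  have hbc : Commute b c := hc ▸ (hab.symm.mul_right (Commute.refl b)).inv_right
  have hcomm (i j : Fin 3) : Commute (![a, b, c] i) (![a, b, c] j) := by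
    fin_cases i <;> fin_cases j
    all_goals first
      | exact Commute.refl _ | exact hab | exact hab.symm | exact hac | exact hac.symm
      | exact hbc | exact hbc.symm
  obtain ⟨P, hP⟩ := exists_isDiag_conj_of_commute_fin_two (fun i => (![a, b, c] i).1)
    (fun i => exists_isDiag_conj _)
    (fun i j => (hcomm i j).map (specialUnitaryGroup (Fin 2) ℂ).subtype)
  exact ⟨P, hP 0, hP 1, hP 2⟩

end specialUnitaryGroup

end Matrix

/-- equality holds iff `a₁, a₂, a₃` are simultaneously diagonalizable
(equivalently, pairwise commute). -/
theorem su2_trace_equality_iff_simultaneously_diagonalizable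
    (a₁ a₂ a₃ : Matrix.specialUnitaryGroup (Fin 2) ℂ) (C₁ C₂ C₃ : ℝ)
    (hprod : a₁ * a₂ * a₃ = 1)
    (h₁ : spectrum ℂ (a₁ : Matrix (Fin 2) (Fin 2) ℂ) =
      {-Complex.exp (Complex.I * C₁), -Complex.exp (-(Complex.I * C₁))})
    (h₂ : spectrum ℂ (a₂ : Matrix (Fin 2) (Fin 2) ℂ) =
      {-Complex.exp (Complex.I * C₂), -Complex.exp (-(Complex.I * C₂))})
    (h₃ : spectrum ℂ (a₃ : Matrix (Fin 2) (Fin 2) ℂ) =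
      {-Complex.exp (Complex.I * C₃), -Complex.exp (-(Complex.I * C₃))}) :
    (Real.cos C₁ ^ 2 + Real.cos C₂ ^ 2 + Real.cos C₃ ^ 2 +
        2 * Real.cos C₁ * Real.cos C₂ * Real.cos C₃ = 1) ↔
      (∃ P : GL (Fin 2) ℂ,
        ((P⁻¹ : GL (Fin 2) ℂ) * (a₁ : Matrix (Fin 2) (Fin 2) ℂ) * P : Matrix (Fin 2) (Fin 2) ℂ).IsDiag ∧
        ((P⁻¹ : GL (Fin 2) ℂ) * (a₂ : Matrix (Fin 2) (Fin 2) ℂ) * P : Matrix (Fin 2) (Fin 2) ℂ).IsDiag ∧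
        ((P⁻¹ : GL (Fin 2) ℂ) * (a₃ : Matrix (Fin 2) (Fin 2) ℂ) * P : Matrix (Fin 2) (Fin 2) ℂ).IsDiag) := by
  have hdet (a : specialUnitaryGroup (Fin 2) ℂ) : a.1.det = 1 :=
    (mem_specialUnitaryGroup_iff.mp a.2).2
  have ht₁ := trace_eq_neg_two_mul_cos (hdet a₁) (h₁ ▸ Set.mem_insert _ _)
  have ht₂ := trace_eq_neg_two_mul_cos (hdet a₂) (h₂ ▸ Set.mem_insert _ _)
  have ht₃ : trace (a₁ * a₂).1 = -2 * Real.cos C₃ := by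
    rw [← specialUnitaryGroup.trace_coe_inv, ← eq_inv_of_mul_eq_one_right hprod]
    exact trace_eq_neg_two_mul_cos (hdet a₃) (h₃ ▸ Set.mem_insert _ _)
  have htr := specialUnitaryGroup.trace_commutatorElement a₁ a₂
  rw [ht₁, ht₂, ht₃] at htr
  rw [← specialUnitaryGroup.commute_iff_exists_isDiag_conj hprod,
    ← specialUnitaryGroup.trace_commutatorElement_eq_two_iff, htr, ← ofReal_inj]
  push_cast
  constructor <;> intro h
  · linear_combination 4 * h
  · linear_combination h / 4
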